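/- Let A be a complete normed ring with unit 1, R : ℝ → A Bochner measurable, β : ℝ → ℝ integrable on all of ℝ with ‖R(τ)‖ ≤ β(τ) a.e., and Q(t,0) the Dyson series with base point 0. Then the limit Q₊ := lim_{t→+∞} Q(t,0) exists in the norm of A; likewise the limit Q₋ := lim_{t→−∞} Q(t,0) exists in the norm of A. -/

import Mathlib

open MeasureTheory intervalIntegral Filter Topology

/-- The `k`-fold time-ordered iterated Bochner integral
`∫_s^t R(t₁) (∫_s^{t₁} R(t₂) ( ⋯ (∫_s^{t_{k−1}} R(t_k) dt_k) ⋯ ) dt₂) dt₁`. -/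
noncomputable def timeOrderedIntegral {A : Type*} [NormedRing A] [NormedSpace ℝ A]
    (f : ℝ → A) (s : ℝ) : ℕ → ℝ → A
  | 0, _ => 1
  | k + 1, t => ∫ τ in s..t, f τ * timeOrderedIntegral f s k τ

/-- The Dyson series
`Q(t,s) = 1 + Σ_{k≥1} i^k ∫_s^t R(t₁) ∫_s^{t₁} R(t₂) ⋯ ∫_s^{t_{k−1}} R(t_k) dt_k ⋯ dt₁`. -/
noncomputable def dyson {A : Type*} [NormedRing A] [NormedAlgebra ℂ A]
    (R : ℝ → A) (s t : ℝ) : A :=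
  1 + ∑' k : ℕ, (Complex.I ^ (k + 1)) • timeOrderedIntegral R s (k + 1) t

/-!
Each term `g_{k+1}(t) = ∫_0^t R g_k` of the Dyson series is the primitive of an integrable
function, so it has limits at `±∞`. With `Φ(t) = ∫_0^t |β|`, the fundamental theorem of calculus
for the absolutely continuous function `Φ^{k+1}` gives `∫_0^t |β| |Φ|^k = |Φ(t)|^{k+1}/(k+1)`, hence
`‖g_k(t)‖ ≤ ‖1‖ |Φ(t)|^k / k! ≤ ‖1‖ (∫ |β|)^k / k!`. This bound is summable and uniform in `t`,
so Tannery's theorem passes the termwise limits through the series.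
-/

open Set
open scoped Interval Nat

theorem AbsolutelyContinuousOnInterval.fun_pow {f : ℝ → ℝ} {a b : ℝ}
    (hf : AbsolutelyContinuousOnInterval f a b) (n : ℕ) :
    AbsolutelyContinuousOnInterval (fun x => f x ^ n) a b := by
  induction n with
  | zero =>
    simpa using (LipschitzWith.const (1 : ℝ)).lipschitzOnWith.absolutelyContinuousOnInterval
  | succ n ih => simpa only [_root_.pow_succ] using ih.fun_mul hf

theorem integral_mul_primitive_pow {b : ℝ → ℝ} {a t : ℝ} (hb : IntervalIntegrable b volume a t)
    (k : ℕ) :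
    ∫ x in a..t, b x * (∫ y in a..x, b y) ^ k = (∫ y in a..t, b y) ^ (k + 1) / (k + 1) := by
  set Φ := fun x => ∫ y in a..x, b y
  have hΦ : AbsolutelyContinuousOnInterval Φ a t :=
    hb.absolutelyContinuousOnInterval_intervalIntegral left_mem_uIcc
  have hderiv : ∀ᵐ x, x ∈ Ι a t →
      deriv (fun x => Φ x ^ (k + 1)) x = (k + 1) * (b x * Φ x ^ k) := by
    filter_upwards [hb.ae_hasDerivAt_integral] with x hx hxt
    rw [((hx (uIoc_subset_uIcc hxt) a left_mem_uIcc).fun_pow (k + 1)).deriv]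
    push_cast
    ring
  have hFTC := (hΦ.fun_pow (k + 1)).integral_deriv_eq_sub
  rw [integral_congr_ae hderiv, intervalIntegral.integral_const_mul] at hFTC
  simp only [Φ, integral_same, zero_pow k.succ_ne_zero, sub_zero] at hFTC
  rw [← hFTC]
  field_simp

theorem abs_integral_mul_abs_primitive_pow {b : ℝ → ℝ} {s t : ℝ}
    (hb : IntervalIntegrable b volume s t) (hb0 : ∀ x, 0 ≤ b x) (k : ℕ) :
    |∫ x in s..t, b x * |∫ y in s..x, b y| ^ k| = |∫ y in s..t, b y| ^ (k + 1) / (k + 1) := by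
  rcases le_total s t with hst | hts
  · have hΦ : ∀ x, s ≤ x → 0 ≤ ∫ y in s..x, b y := fun x hx =>
      integral_nonneg hx fun y _ => hb0 y
    have hEq : EqOn (fun x => b x * |∫ y in s..x, b y| ^ k)
        (fun x => b x * (∫ y in s..x, b y) ^ k) (uIcc s t) := fun x hx => by
      dsimp only
      rw [abs_of_nonneg (hΦ x (uIcc_of_le hst ▸ hx).1)]
    rw [integral_congr hEq, integral_mul_primitive_pow hb, abs_of_nonneg (hΦ t hst),
      abs_of_nonneg (by have := hΦ t hst; positivity)]
  · have hΦ : ∀ x, x ≤ s → ∫ y in s..x, b y ≤ 0 := fun x hx => by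
      rw [integral_symm]
      exact neg_nonpos.2 (integral_nonneg hx fun y _ => hb0 y)
    have hEq : EqOn (fun x => b x * |∫ y in s..x, b y| ^ k)
        (fun x => (-1) ^ k * (b x * (∫ y in s..x, b y) ^ k)) (uIcc s t) := fun x hx => by
      dsimp only
      rw [abs_of_nonpos (hΦ x (uIcc_of_ge hts ▸ hx).2), neg_pow]
      ring
    rw [integral_congr hEq, intervalIntegral.integral_const_mul, integral_mul_primitive_pow hb,
      abs_mul, abs_div, abs_pow, abs_pow, abs_neg, abs_one, one_pow, one_mul,
      abs_of_pos (by positivity : (0 : ℝ) < k + 1)]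

theorem norm_intervalIntegral_le_integral_norm {E : Type*} [NormedAddCommGroup E]
    [NormedSpace ℝ E] {f : ℝ → E} (hf : Integrable f) (s t : ℝ) :
    ‖∫ x in s..t, f x‖ ≤ ∫ x, ‖f x‖ :=
  norm_integral_le_integral_norm_uIoc.trans
    (setIntegral_le_integral hf.norm (Eventually.of_forall fun _ => norm_nonneg _))

section TimeOrderedIntegral

variable {A : Type*} [NormedRing A] [NormedSpace ℝ A] {R : ℝ → A} {b : ℝ → ℝ} {s : ℝ}

theorem norm_timeOrderedIntegral_succ_le {t : ℝ} (hb : IntervalIntegrable b volume s t)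
    (hb0 : ∀ x, 0 ≤ b x) (hRb : ∀ᵐ τ, ‖R τ‖ ≤ b τ) {k : ℕ}
    (hk : ∀ τ, ‖timeOrderedIntegral R s k τ‖ ≤ ‖(1 : A)‖ * |∫ y in s..τ, b y| ^ k / k !) :
    ‖timeOrderedIntegral R s (k + 1) t‖ ≤
      ‖(1 : A)‖ * |∫ y in s..t, b y| ^ (k + 1) / (k + 1)! := by
  have hcont : ContinuousOn (fun τ => |∫ y in s..τ, b y| ^ k) (uIcc s t) :=
    ((hb.absolutelyContinuousOnInterval_intervalIntegral left_mem_uIcc).continuousOn.abs).pow k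
  have hmajorant : IntervalIntegrable
      (fun τ => ‖(1 : A)‖ / k ! * (b τ * |∫ y in s..τ, b y| ^ k)) volume s t :=
    (hb.mul_continuousOn hcont).const_mul _
  have hle : ∀ᵐ τ ∂volume.restrict (Ι s t), ‖R τ * timeOrderedIntegral R s k τ‖ ≤
      ‖(1 : A)‖ / k ! * (b τ * |∫ y in s..τ, b y| ^ k) := by
    refine ae_restrict_of_ae (hRb.mono fun τ hτ => (norm_mul_le_of_le hτ (hk τ)).trans_eq ?_)
    ring
  calc ‖timeOrderedIntegral R s (k + 1) t‖
      ≤ |∫ τ in s..t, ‖(1 : A)‖ / k ! * (b τ * |∫ y in s..τ, b y| ^ k)| :=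
        norm_integral_le_abs_of_norm_le hle hmajorant
    _ = ‖(1 : A)‖ / k ! * (|∫ y in s..t, b y| ^ (k + 1) / (k + 1)) := by
        rw [intervalIntegral.integral_const_mul, abs_mul, abs_of_nonneg (by positivity),
          abs_integral_mul_abs_primitive_pow hb hb0]
    _ = _ := by
        rw [Nat.factorial_succ]
        push_cast
        field_simp

theorem integrable_mul_timeOrderedIntegral_and_norm_le (hR : Integrable R) (hb : Integrable b)
    (hb0 : ∀ x, 0 ≤ b x) (hRb : ∀ᵐ τ, ‖R τ‖ ≤ b τ) (k : ℕ) :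
    Integrable (fun τ => R τ * timeOrderedIntegral R s k τ) ∧
      ∀ t, ‖timeOrderedIntegral R s k t‖ ≤ ‖(1 : A)‖ * |∫ y in s..t, b y| ^ k / k ! := by
  induction k with
  | zero => exact ⟨by simpa [timeOrderedIntegral] using hR, fun t => by simp [timeOrderedIntegral]⟩
  | succ k ih =>
    have hnorm t := norm_timeOrderedIntegral_succ_le hb.intervalIntegrable (t := t) hb0 hRb ih.2
    refine ⟨hR.mul_bdd (c := ‖(1 : A)‖ * (∫ x, ‖b x‖) ^ (k + 1) / (k + 1)!)
      (ih.1.continuous_primitive s).aestronglyMeasurable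
      (Eventually.of_forall fun t => (hnorm t).trans ?_), hnorm⟩
    gcongr
    simpa only [Real.norm_eq_abs] using norm_intervalIntegral_le_integral_norm hb s t

theorem integrable_mul_timeOrderedIntegral (hR : Integrable R) (hb : Integrable b)
    (hb0 : ∀ x, 0 ≤ b x) (hRb : ∀ᵐ τ, ‖R τ‖ ≤ b τ) (k : ℕ) :
    Integrable (fun τ => R τ * timeOrderedIntegral R s k τ) :=
  (integrable_mul_timeOrderedIntegral_and_norm_le hR hb hb0 hRb k).1

theorem norm_timeOrderedIntegral_le (hR : Integrable R) (hb : Integrable b)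
    (hb0 : ∀ x, 0 ≤ b x) (hRb : ∀ᵐ τ, ‖R τ‖ ≤ b τ) (k : ℕ) (t : ℝ) :
    ‖timeOrderedIntegral R s k t‖ ≤ ‖(1 : A)‖ * (∫ x, ‖b x‖) ^ k / k ! := by
  refine ((integrable_mul_timeOrderedIntegral_and_norm_le hR hb hb0 hRb k).2 t).trans ?_
  gcongr
  simpa only [Real.norm_eq_abs] using norm_intervalIntegral_le_integral_norm hb s t

theorem tendsto_timeOrderedIntegral_succ_atTop {k : ℕ}
    (h : Integrable (fun τ => R τ * timeOrderedIntegral R s k τ)) :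
    Tendsto (timeOrderedIntegral R s (k + 1)) atTop
      (𝓝 (∫ τ in Ioi s, R τ * timeOrderedIntegral R s k τ)) :=
  intervalIntegral_tendsto_integral_Ioi s h.integrableOn tendsto_id

theorem tendsto_timeOrderedIntegral_succ_atBot {k : ℕ}
    (h : Integrable (fun τ => R τ * timeOrderedIntegral R s k τ)) :
    Tendsto (timeOrderedIntegral R s (k + 1)) atBot
      (𝓝 (-∫ τ in Iic s, R τ * timeOrderedIntegral R s k τ)) :=
  (intervalIntegral_tendsto_integral_Iic s h.integrableOn tendsto_id).neg.congr fun t =>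
    (integral_symm t s).symm

end TimeOrderedIntegral

theorem tendsto_dyson {A : Type*} [NormedRing A] [NormedAlgebra ℂ A] [CompleteSpace A]
    {R : ℝ → A} {s : ℝ} {l : Filter ℝ} {L : ℕ → A} {u : ℕ → ℝ} (hu : Summable u)
    (hbound : ∀ k t, ‖timeOrderedIntegral R s (k + 1) t‖ ≤ u k)
    (hlim : ∀ k, Tendsto (timeOrderedIntegral R s (k + 1)) l (𝓝 (L k))) :
    Tendsto (dyson R s) l (𝓝 (1 + ∑' k, Complex.I ^ (k + 1) • L k)) := by
  refine (tendsto_tsum_of_dominated_convergence hu (fun k => (hlim k).const_smul _)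
    (Eventually.of_forall fun t k => ?_)).const_add 1
  rw [norm_smul, norm_pow, Complex.norm_I, one_pow, one_mul]
  exact hbound k t

theorem dyson_limits_exist
    {A : Type*} [NormedRing A] [NormedAlgebra ℂ A] [CompleteSpace A]
    (R : ℝ → A) (β : ℝ → ℝ)
    (hR : AEStronglyMeasurable R (volume : Measure ℝ))
    (hβ : Integrable β (volume : Measure ℝ))
    (hRβ : ∀ᵐ τ ∂(volume : Measure ℝ), ‖R τ‖ ≤ β τ) :
    (∃ Qp : A, Tendsto (fun t : ℝ => dyson R 0 t) atTop (𝓝 Qp)) ∧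
      (∃ Qm : A, Tendsto (fun t : ℝ => dyson R 0 t) atBot (𝓝 Qm)) := by
  have hb : Integrable (fun τ => |β τ|) := hβ.abs
  have hb0 (τ : ℝ) : 0 ≤ |β τ| := abs_nonneg _
  have hRb : ∀ᵐ τ, ‖R τ‖ ≤ |β τ| := hRβ.mono fun τ h => h.trans (le_abs_self _)
  have hRi : Integrable R := hβ.mono' hR hRβ
  have hint := integrable_mul_timeOrderedIntegral (s := 0) hRi hb hb0 hRb
  have hsum : Summable fun k : ℕ => ‖(1 : A)‖ * (∫ x, ‖|β x|‖) ^ (k + 1) / (k + 1)! :=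
    (summable_nat_add_iff (f := fun k : ℕ => ‖(1 : A)‖ * (∫ x, ‖|β x|‖) ^ k / k !) 1).2 <| by
      simpa only [mul_div_assoc] using (Real.summable_pow_div_factorial _).mul_left ‖(1 : A)‖
  have hbound k t := norm_timeOrderedIntegral_le (s := 0) hRi hb hb0 hRb (k + 1) t
  exact ⟨⟨_, tendsto_dyson hsum hbound fun k => tendsto_timeOrderedIntegral_succ_atTop (hint k)⟩,
    ⟨_, tendsto_dyson hsum hbound fun k => tendsto_timeOrderedIntegral_succ_atBot (hint k)⟩⟩
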